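/- Let Γ = (V, E) be a Cayley tree of order 2, with fixed root x₀ and balls V_n. For every β with 144·e^{−2β} < 1 and every constant C₁ > 1/(2β − ln 144), the finite-volume Gibbs measures with all-plus boundary condition satisfy μ_{n,β}^+ ({σ ∈ Ω_n^+ : some connected component C of σ^{−1}(−1) has |∂C| > C₁·ln |V_n|}) → 0 as n → ∞. -/

import Mathlib

/-- A Cayley tree of order 2: a connected acyclic simple graph every vertex of which has
degree 3. -/
def IsCayleyTree2 {V : Type*} (Γ : SimpleGraph V) : Prop :=
  Γ.Connected ∧ Γ.IsAcyclic ∧ ∀ v : V, (Γ.neighborSet v).ncard = 3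

/-- The outer boundary `∂A` of a set of vertices `A`. -/
def outerBoundary {V : Type*} (Γ : SimpleGraph V) (A : Set V) : Set V :=
  {x | x ∉ A ∧ ∃ y ∈ A, Γ.Adj x y}

/-- `C` is a connected component of the subgraph induced on `S`. -/
def IsCompOf {V : Type*} (Γ : SimpleGraph V) (S C : Set V) : Prop :=
  C ⊆ S ∧ C.Nonempty ∧ (Γ.induce C).Connected ∧
    ∀ x ∈ S, ∀ y ∈ C, Γ.Adj x y → x ∈ C

/-- The ball `V_n = {x : d(x₀, x) ≤ n}` around the root `x₀`. -/
def ballSet {V : Type*} (Γ : SimpleGraph V) (x₀ : V) (n : ℕ) : Set V :=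
  {x | Γ.dist x₀ x ≤ n}

/-- The set of edges of `Γ` having at least one endpoint in `A`. -/
def meetingEdges {V : Type*} (Γ : SimpleGraph V) (A : Set V) : Set (Sym2 V) :=
  {e | e ∈ Γ.edgeSet ∧ ∃ x ∈ A, x ∈ e}

/-- The ferromagnetic Ising Hamiltonian (`J₁ = −1`, `J₂ = 0`) in volume `V_n`:
`H_n(σ) = −∑ σ(x)σ(y)`, the sum over all edges meeting `V_n`. -/
noncomputable def isingH {V : Type*} (Γ : SimpleGraph V) (x₀ : V) (n : ℕ) (σ : V → ℤ) : ℤ :=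
  -∑ᶠ e ∈ meetingEdges Γ (ballSet Γ x₀ n),
      Sym2.lift ⟨fun x y => σ x * σ y, fun x y => mul_comm (σ x) (σ y)⟩ e

/-- `Ω_n^ε`: spin configurations equal to `ε` outside `V_n`. -/
def OmegaBC {V : Type*} (Γ : SimpleGraph V) (x₀ : V) (n : ℕ) (ε : ℤ) : Set (V → ℤ) :=
  {σ | (∀ x, σ x = 1 ∨ σ x = -1) ∧ ∀ x ∉ ballSet Γ x₀ n, σ x = ε}

/-- The finite-volume Gibbs measure `μ_{n,β}^ε` of the event `A`. -/
noncomputable def gibbs {V : Type*} (Γ : SimpleGraph V) (x₀ : V) (n : ℕ) (β : ℝ) (ε : ℤ)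
    (A : Set (V → ℤ)) : ℝ :=
  (∑ᶠ σ ∈ A ∩ OmegaBC Γ x₀ n ε, Real.exp (-β * (isingH Γ x₀ n σ : ℝ))) /
    ∑ᶠ σ ∈ OmegaBC Γ x₀ n ε, Real.exp (-β * (isingH Γ x₀ n σ : ℝ))

section Aux

open SimpleGraph
open scoped Classical

variable {V : Type*} {Γ : SimpleGraph V}

/-- In an acyclic connected graph, every path realizes the distance. -/
lemma path_length_eq_dist (hconn : Γ.Connected) (hac : Γ.IsAcyclic) {r x : V}
    (p : Γ.Walk r x) (hp : p.IsPath) : p.length = Γ.dist r x := by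
  obtain ⟨q, hq, hql⟩ := (hconn r x).exists_path_of_dist
  have := hac.path_unique ⟨p, hp⟩ ⟨q, hq⟩
  rw [← hql]
  exact congrArg Walk.length (congrArg Subtype.val this)

lemma concat_isPath {r x y : V} {p : Γ.Walk r x} (hp : p.IsPath) (h : Γ.Adj x y)
    (hy : y ∉ p.support) : (p.concat h).IsPath := by
  rw [Walk.concat_eq_append]
  simp only [Walk.isPath_def, Walk.support_append, List.nodup_append] at *
  simp_all
  exact fun a ha h => hy (h ▸ ha)

/-- In a tree, at most one neighbour of `x` is weakly closer to `r` than `x`. -/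
lemma at_most_one_closer (hconn : Γ.Connected) (hac : Γ.IsAcyclic) {r x y z : V}
    (hxy : Γ.Adj x y) (hxz : Γ.Adj x z)
    (hy : Γ.dist r y ≤ Γ.dist r x) (hz : Γ.dist r z ≤ Γ.dist r x) : y = z := by
  classical
  obtain ⟨p, hp, hpl⟩ := (hconn r x).exists_path_of_dist
  have key : ∀ w : V, Γ.Adj x w → Γ.dist r w ≤ Γ.dist r x → w = p.reverse.getVert 1 := by
    intro w hxw hw
    have hwp : w ∈ p.support := by
      by_contra hws
      have hcp : (p.concat hxw).IsPath := concat_isPath hp hxw hws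
      have := path_length_eq_dist hconn hac _ hcp
      rw [Walk.length_concat, hpl] at this
      omega
    -- the part of p after w equals the single edge w-x
    have hdrop : (p.dropUntil w hwp).IsPath := hp.dropUntil hwp
    have hsing : (Path.singleton hxw.symm : Γ.Walk w x) = p.dropUntil w hwp := by
      have := hac.path_unique (Path.singleton hxw.symm) ⟨p.dropUntil w hwp, hdrop⟩
      exact congrArg Subtype.val this
    have hspec := p.take_spec hwp
    rw [← hsing] at hspec
    have : p = (p.takeUntil w hwp).concat hxw.symm := by
      conv_lhs => rw [← hspec]
      rw [Walk.concat_eq_append]; rfl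
    rw [this, Walk.reverse_concat]
    simp [Walk.getVert_cons_succ, Walk.getVert_zero]
  rw [key y hxy hy, key z hxz hz]

lemma nbhd_finite (hdeg : ∀ v : V, (Γ.neighborSet v).ncard = 3) (v : V) :
    (Γ.neighborSet v).Finite := by
  by_contra h
  have := Set.Infinite.ncard (h : ¬ (Γ.neighborSet v).Finite)
  rw [hdeg v] at this; omega

lemma exists_two_neighbors (hdeg : ∀ v : V, (Γ.neighborSet v).ncard = 3) (v : V) :
    ∃ y z, y ≠ z ∧ Γ.Adj v y ∧ Γ.Adj v z := by
  have h1 : 1 < (Γ.neighborSet v).ncard := by rw [hdeg v]; omega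
  obtain ⟨y, z, hy, hz, hyz⟩ := (Set.one_lt_ncard_iff (nbhd_finite hdeg v)).mp h1
  exact ⟨y, z, hyz, hy, hz⟩

lemma dist_adj_le (hconn : Γ.Connected) {r x y : V} (h : Γ.Adj x y) :
    Γ.dist r y ≤ Γ.dist r x + 1 := by
  have := hconn.dist_triangle (u := r) (v := x) (w := y)
  have h1 : Γ.dist x y = 1 := by
    rw [SimpleGraph.dist_eq_one_iff_adj]; exact h
  omega

/-- In the Cayley tree there is a vertex at every distance from the root. -/
lemma exists_vertex_at_dist (hconn : Γ.Connected) (hac : Γ.IsAcyclic)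
    (hdeg : ∀ v : V, (Γ.neighborSet v).ncard = 3) (x₀ : V) (d : ℕ) :
    ∃ x : V, Γ.dist x₀ x = d := by
  induction d with
  | zero => exact ⟨x₀, SimpleGraph.dist_self⟩
  | succ d ih =>
    obtain ⟨x, hx⟩ := ih
    obtain ⟨y, z, hyz, hxy, hxz⟩ := exists_two_neighbors hdeg x
    have : ¬ (Γ.dist x₀ y ≤ Γ.dist x₀ x ∧ Γ.dist x₀ z ≤ Γ.dist x₀ x) := by
      rintro ⟨h1, h2⟩
      exact hyz (at_most_one_closer hconn hac hxy hxz h1 h2)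
    rcases not_and_or.mp this with h | h
    · have h2 := dist_adj_le hconn (r := x₀) hxy
      exact ⟨y, by omega⟩
    · have h2 := dist_adj_le hconn (r := x₀) hxz
      exact ⟨z, by omega⟩

lemma ball_finite (hconn : Γ.Connected)
    (hdeg : ∀ v : V, (Γ.neighborSet v).ncard = 3) (x₀ : V) (n : ℕ) :
    (ballSet Γ x₀ n).Finite := by
  induction n with
  | zero =>
    have : ballSet Γ x₀ 0 ⊆ {x₀} := by
      intro x hx
      simp only [ballSet, Set.mem_setOf_eq, Nat.le_zero] at hx
      have := (hconn.dist_eq_zero_iff (u := x₀) (v := x)).mp hx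
      simp [this.symm]
    exact Set.Finite.subset (Set.finite_singleton x₀) this
  | succ n ih =>
    have hsub : ballSet Γ x₀ (n+1) ⊆
        ballSet Γ x₀ n ∪ ⋃ x ∈ ballSet Γ x₀ n, Γ.neighborSet x := by
      intro y hy
      simp only [ballSet, Set.mem_setOf_eq] at hy
      rcases Nat.lt_or_ge (Γ.dist x₀ y) (n+1) with h | h
      · exact Or.inl (by simpa [ballSet] using Nat.lt_succ_iff.mp h)
      · have hd : Γ.dist x₀ y = n + 1 := le_antisymm hy h
        have hne : y ≠ x₀ := by
          rintro rfl; rw [SimpleGraph.dist_self] at hd; omega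
        obtain ⟨p, hp, hpl⟩ := (hconn x₀ y).exists_path_of_dist
        obtain ⟨w, hadj, q, hq⟩ := Walk.exists_eq_cons_of_ne hne p.reverse
        have hql : q.length = n := by
          have := congrArg Walk.length hq
          simp only [Walk.length_cons, Walk.length_reverse] at this
          omega
        have hdw : Γ.dist x₀ w ≤ n := by
          rw [SimpleGraph.dist_comm]
          calc Γ.dist w x₀ ≤ q.length := SimpleGraph.dist_le q
          _ = n := hql
        refine Or.inr (Set.mem_biUnion hdw ?_)
        exact hadj.symm
    refine Set.Finite.subset (ih.union (ih.biUnion (fun x _ => nbhd_finite hdeg x))) hsub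

lemma ball_ncard_ge (hconn : Γ.Connected) (hac : Γ.IsAcyclic)
    (hdeg : ∀ v : V, (Γ.neighborSet v).ncard = 3) (x₀ : V) (n : ℕ) :
    n + 1 ≤ (ballSet Γ x₀ n).ncard := by
  classical
  choose f hf using exists_vertex_at_dist hconn hac hdeg x₀
  have hmaps : ∀ d ∈ Finset.range (n+1), f d ∈ (ball_finite hconn hdeg x₀ n).toFinset := by
    intro d hd
    simp only [Set.Finite.mem_toFinset, ballSet, Set.mem_setOf_eq, hf d]
    exact Nat.lt_succ_iff.mp (Finset.mem_range.mp hd)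
  have hinj : ∀ d ∈ Finset.range (n+1), ∀ e ∈ Finset.range (n+1), f d = f e → d = e := by
    intro d _ e _ h
    rw [← hf d, ← hf e, h]
  have := Finset.card_le_card_of_injOn f hmaps hinj
  rw [Set.ncard_eq_toFinset_card _ (ball_finite hconn hdeg x₀ n)]
  simpa using this

/-- Walk-connectivity of a vertex set. -/
def WC (Γ : SimpleGraph V) (C : Set V) : Prop :=
  ∀ x ∈ C, ∀ y ∈ C, ∃ w : Γ.Walk x y, ∀ z ∈ w.support, z ∈ C

lemma wc_of_induce_connected {C : Set V} (h : (Γ.induce C).Connected) : WC Γ C := by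
  intro x hx y hy
  obtain ⟨p⟩ := h ⟨x, hx⟩ ⟨y, hy⟩
  let f : Γ.induce C →g Γ := ⟨Subtype.val, fun {a b} hab => hab⟩
  refine ⟨p.map f, ?_⟩
  intro z hz
  rw [Walk.support_map, List.mem_map] at hz
  obtain ⟨⟨z', hz'⟩, _, rfl⟩ := hz
  exact hz'

/-- In a tree, between two points of a walk-connected set there is a path inside the set. -/
lemma exists_path_in_set (hconn : Γ.Connected) (hac : Γ.IsAcyclic) {C : Set V}
    (hWC : WC Γ C) {x y : V} (hx : x ∈ C) (hy : y ∈ C) :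
    ∃ p : Γ.Walk x y, p.IsPath ∧ ∀ z ∈ p.support, z ∈ C := by
  classical
  obtain ⟨w, hw⟩ := hWC x hx y hy
  exact ⟨w.bypass, w.bypass_isPath, fun z hz => hw z (w.support_bypass_subset hz)⟩

/-- Removing a farthest point of a walk-connected set in a tree keeps it walk-connected. -/
lemma wc_remove_max (hconn : Γ.Connected) (hac : Γ.IsAcyclic) {C : Set V}
    (hWC : WC Γ C) {c₀ u : V} (hc₀ : c₀ ∈ C) (hu : u ∈ C)
    (hmax : ∀ z ∈ C, Γ.dist c₀ z ≤ Γ.dist c₀ u) : WC Γ (C \ {u}) := by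
  classical
  rintro x ⟨hx, hxu⟩ y ⟨hy, hyu⟩
  obtain ⟨p, hp, hps⟩ := exists_path_in_set hconn hac hWC hx hy
  refine ⟨p, ?_⟩
  have hup : u ∉ p.support := by
    intro hus
    have hxu' : x ≠ u := fun h => hxu (by simp [h])
    have hyu' : u ≠ y := fun h => hyu (by simp [h.symm])
    have hq : (p.takeUntil u hus).IsPath := hp.takeUntil hus
    have hr : (p.dropUntil u hus).IsPath := hp.dropUntil hus
    obtain ⟨a, haadj, q₂, hq₂⟩ := Walk.exists_eq_cons_of_ne (fun h => hxu' h.symm)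
      (p.takeUntil u hus).reverse
    obtain ⟨b, hbadj, r₂, hr₂⟩ := Walk.exists_eq_cons_of_ne hyu' (p.dropUntil u hus)
    have hamem : a ∈ (p.takeUntil u hus).support := by
      have : a ∈ (p.takeUntil u hus).reverse.support := by rw [hq₂]; simp
      rwa [Walk.support_reverse, List.mem_reverse] at this
    have haC : a ∈ C := hps a (p.support_takeUntil_subset hus hamem)
    have hbC : b ∈ C := by
      apply hps
      apply p.support_dropUntil_subset hus
      rw [hr₂]; simp
    have hab : a = b := at_most_one_closer hconn hac haadj hbadj
      (hmax a haC) (hmax b hbC)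
    -- but a and b are on the two disjoint pieces of the path p
    have hnodup := hp.support_nodup
    rw [← p.take_spec hus, Walk.support_append, List.nodup_append] at hnodup
    refine hnodup.2.2 a hamem a ?_ rfl
    show a ∈ (p.dropUntil u hus).support.tail
    rw [hr₂, hab]; simp
  exact fun z hz => ⟨hps z hz, fun h => hup (h ▸ hz)⟩

/-- A point of a walk-connected set with at least two points has a neighbour in the set. -/
lemma exists_neighbor_in_set (hconn : Γ.Connected) (hac : Γ.IsAcyclic) {C : Set V}
    (hWC : WC Γ C) {u c₀ : V} (hu : u ∈ C) (hc₀ : c₀ ∈ C) (hne : u ≠ c₀) :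
    ∃ b ∈ C, b ≠ u ∧ Γ.Adj u b := by
  obtain ⟨p, hp, hps⟩ := exists_path_in_set hconn hac hWC hu hc₀
  obtain ⟨b, hbadj, r₂, hr₂⟩ := Walk.exists_eq_cons_of_ne hne p
  have hbC : b ∈ C := hps b (by rw [hr₂]; simp)
  exact ⟨b, hbC, fun h => (Γ.irrefl (h ▸ hbadj)), hbadj⟩

/-- In a tree, a vertex outside `C` adjacent to `u ∈ C` has no other neighbour in `C`. -/
lemma outside_no_second_neighbor (hconn : Γ.Connected) (hac : Γ.IsAcyclic) {C : Set V}
    (hWC : WC Γ C) {u w c : V} (hu : u ∈ C) (hw : w ∉ C) (hadj : Γ.Adj u w)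
    (hc : c ∈ C) (hcu : c ≠ u) (hwc : Γ.Adj w c) : False := by
  obtain ⟨p, hp, hps⟩ := exists_path_in_set hconn hac hWC hc hu
  have hwp : w ∉ p.support := fun h => hw (hps w h)
  have hcons : (Walk.cons hwc p).IsPath := hp.cons hwp
  have := hac.path_unique ⟨Walk.cons hwc p, hcons⟩ (Path.singleton hadj.symm)
  have hlen := congrArg (fun q => Walk.length q.val) this
  simp only [Walk.length_cons, Path.singleton] at hlen
  have : p.length = 0 := by simpa using hlen
  exact hcu (Walk.eq_of_length_eq_zero this)


lemma boundary_subset_biUnion (C : Set V) :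
    outerBoundary Γ C ⊆ ⋃ c ∈ C, Γ.neighborSet c := by
  rintro x ⟨hx, y, hy, hadj⟩
  exact Set.mem_biUnion hy hadj.symm

lemma boundary_finite (hdeg : ∀ v : V, (Γ.neighborSet v).ncard = 3) {C : Set V}
    (hfin : C.Finite) : (outerBoundary Γ C).Finite :=
  Set.Finite.subset (hfin.biUnion (fun c _ => nbhd_finite hdeg c))
    (boundary_subset_biUnion C)

/-- Peierls' key estimate: the outer boundary of a finite connected set in the
Cayley tree of order 2 has at least `|C| + 2` elements. -/
lemma boundary_card_ge (hconn : Γ.Connected) (hac : Γ.IsAcyclic)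
    (hdeg : ∀ v : V, (Γ.neighborSet v).ncard = 3) :
    ∀ n : ℕ, ∀ C : Set V, C.Finite → C.Nonempty → WC Γ C → C.ncard = n →
      C.ncard + 2 ≤ (outerBoundary Γ C).ncard := by
  intro n
  induction n using Nat.strong_induction_on with
  | _ n IH =>
  intro C hfin hne hWC hcard
  obtain ⟨c₀, hc₀⟩ := hne
  rcases eq_or_ne C {c₀} with rfl | hCne
  · -- singleton case
    have hb : outerBoundary Γ {c₀} = Γ.neighborSet c₀ := by
      ext x
      constructor
      · rintro ⟨hx, y, rfl, hadj⟩
        exact hadj.symm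
      · intro hx
        exact ⟨fun h => Γ.irrefl (h ▸ hx : Γ.Adj x x), c₀, rfl, hx.symm⟩
    rw [hb, hdeg c₀, Set.ncard_singleton]
  · -- C has at least two elements
    have h2 : ∃ z ∈ C, z ≠ c₀ := by
      by_contra h
      push_neg at h
      exact hCne (Set.eq_singleton_iff_unique_mem.mpr ⟨hc₀, h⟩)
    obtain ⟨z, hz, hzne⟩ := h2
    obtain ⟨u, hu', hmax'⟩ := (hfin.toFinset).exists_max_image (Γ.dist c₀)
      ((Set.Finite.toFinset_nonempty hfin).mpr ⟨c₀, hc₀⟩)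
    have hu : u ∈ C := by simpa using hu'
    have hmax : ∀ z ∈ C, Γ.dist c₀ z ≤ Γ.dist c₀ u := fun z hz =>
      hmax' z (by simpa using hz)
    have huc₀ : u ≠ c₀ := by
      intro h
      have h2 := hmax z hz
      rw [h, SimpleGraph.dist_self, Nat.le_zero] at h2
      exact hzne ((hconn.dist_eq_zero_iff).mp h2).symm
    set C' := C \ {u} with hC'
    have hfin' : C'.Finite := hfin.diff
    have hne' : C'.Nonempty := ⟨c₀, hc₀, fun h => huc₀ (by simpa using h.symm)⟩
    have hWC' : WC Γ C' := wc_remove_max hconn hac hWC hc₀ hu hmax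
    have hcard' : C'.ncard = n - 1 := by
      rw [hC', Set.ncard_diff_singleton_of_mem hu, hcard]
    have hn1 : 1 ≤ n := hcard ▸ (Set.ncard_pos hfin).mpr ⟨c₀, hc₀⟩
    have hn2 : 2 ≤ n := by
      by_contra h
      push_neg at h
      have hone : C.ncard = 1 := by omega
      obtain ⟨a, ha⟩ := Set.ncard_eq_one.mp hone
      apply hzne
      rw [ha] at hz hc₀
      simp only [Set.mem_singleton_iff] at hz hc₀
      rw [hz, hc₀]
    have hIH := IH (n-1) (by omega) C' hfin' hne' hWC' hcard'
    -- exactly one neighbour of u in C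
    obtain ⟨b, hb, hbne, hub⟩ := exists_neighbor_in_set hconn hac hWC hu hc₀ huc₀
    have huniq : ∀ a ∈ Γ.neighborSet u ∩ C, a = b := by
      rintro a ⟨ha, haC⟩
      exact at_most_one_closer hconn hac ha hub (hmax a haC) (hmax b hb)
    -- so at least two neighbours of u are outside C
    have houtside : 2 ≤ (Γ.neighborSet u \ C).ncard := by
      have hsub : Γ.neighborSet u ⊆ (Γ.neighborSet u \ C) ∪ (Γ.neighborSet u ∩ C) := by
        intro a ha
        by_cases h : a ∈ C
        · exact Or.inr ⟨ha, h⟩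
        · exact Or.inl ⟨ha, h⟩
      have h1 : (Γ.neighborSet u ∩ C).ncard ≤ 1 := by
        have hsb : Γ.neighborSet u ∩ C ⊆ {b} := fun a ha => huniq a ha
        calc (Γ.neighborSet u ∩ C).ncard ≤ ({b} : Set V).ncard :=
              Set.ncard_le_ncard hsb (Set.finite_singleton b)
          _ = 1 := Set.ncard_singleton b
      have h3 := hdeg u
      have h4 : (Γ.neighborSet u).ncard ≤ (Γ.neighborSet u \ C).ncard +
          (Γ.neighborSet u ∩ C).ncard :=
        le_trans (Set.ncard_le_ncard hsub (((nbhd_finite hdeg u).diff).union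
          ((nbhd_finite hdeg u).inter_of_left C))) (Set.ncard_union_le _ _)
      omega
    -- two disjoint subsets of the boundary of C
    have hsub1 : outerBoundary Γ C' \ {u} ⊆ outerBoundary Γ C := by
      rintro x ⟨⟨hx1, c, hc, hadj⟩, hx2⟩
      refine ⟨?_, c, hc.1, hadj⟩
      intro hxC
      rcases eq_or_ne x u with rfl | h
      · exact hx2 rfl
      · exact hx1 ⟨hxC, h⟩
    have hsub2 : Γ.neighborSet u \ C ⊆ outerBoundary Γ C := by
      rintro w ⟨hw1, hw2⟩
      exact ⟨hw2, u, hu, hw1.symm⟩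
    have hdisj : Disjoint (outerBoundary Γ C' \ {u}) (Γ.neighborSet u \ C) := by
      rw [Set.disjoint_left]
      rintro w ⟨⟨hw1, c, hc, hadj⟩, hw2⟩ ⟨hw3, hw4⟩
      exact outside_no_second_neighbor hconn hac hWC hu hw4 hw3 hc.1 hc.2 hadj
    have hbfin := boundary_finite hdeg hfin
    have hbfin' := boundary_finite hdeg hfin'
    have hcard1 : (outerBoundary Γ C').ncard ≤ (outerBoundary Γ C' \ {u}).ncard + 1 := by
      have : outerBoundary Γ C' ⊆ (outerBoundary Γ C' \ {u}) ∪ {u} := by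
        intro a ha
        by_cases h : a = u
        · exact Or.inr (by simp [h])
        · exact Or.inl ⟨ha, h⟩
      calc (outerBoundary Γ C').ncard
          ≤ ((outerBoundary Γ C' \ {u}) ∪ {u}).ncard :=
            Set.ncard_le_ncard this ((hbfin'.diff).union (Set.finite_singleton u))
        _ ≤ (outerBoundary Γ C' \ {u}).ncard + ({u} : Set V).ncard := Set.ncard_union_le _ _
        _ = (outerBoundary Γ C' \ {u}).ncard + 1 := by rw [Set.ncard_singleton]
    have hunion : (outerBoundary Γ C' \ {u}).ncard + (Γ.neighborSet u \ C).ncard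
        ≤ (outerBoundary Γ C).ncard := by
      rw [← Set.ncard_union_eq hdisj (hbfin'.diff) ((nbhd_finite hdeg u).diff)]
      exact Set.ncard_le_ncard (Set.union_subset hsub1 hsub2) hbfin
    rw [hcard] at *
    omega

/-- Every finite walk-connected set admits a closed spanning walk of length `2(|C|-1)`. -/
lemma exists_spanning_walk (hconn : Γ.Connected) (hac : Γ.IsAcyclic) :
    ∀ n : ℕ, ∀ C : Set V, C.Finite → WC Γ C → ∀ v, v ∈ C → C.ncard = n →
      ∃ w : Γ.Walk v v, (∀ z, z ∈ w.support ↔ z ∈ C) ∧ w.length = 2 * (n - 1) := by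
  classical
  intro n
  induction n using Nat.strong_induction_on with
  | _ n IH =>
  intro C hfin hWC v hv hcard
  have hn1 : 1 ≤ n := hcard ▸ (Set.ncard_pos hfin).mpr ⟨v, hv⟩
  rcases eq_or_ne C {v} with rfl | hCne
  · refine ⟨Walk.nil, ?_, ?_⟩
    · intro z; simp
    · have : ({v} : Set V).ncard = 1 := Set.ncard_singleton v
      simp [Walk.length_nil]
      omega
  · have h2 : ∃ z ∈ C, z ≠ v := by
      by_contra h
      push_neg at h
      exact hCne (Set.eq_singleton_iff_unique_mem.mpr ⟨hv, h⟩)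
    obtain ⟨z, hz, hzne⟩ := h2
    obtain ⟨u, hu', hmax'⟩ := (hfin.toFinset).exists_max_image (Γ.dist v)
      ((Set.Finite.toFinset_nonempty hfin).mpr ⟨v, hv⟩)
    have hu : u ∈ C := by simpa using hu'
    have hmax : ∀ z ∈ C, Γ.dist v z ≤ Γ.dist v u := fun z hz => hmax' z (by simpa using hz)
    have huv : u ≠ v := by
      intro h
      have h2 := hmax z hz
      rw [h, SimpleGraph.dist_self, Nat.le_zero] at h2
      exact hzne ((hconn.dist_eq_zero_iff).mp h2).symm
    have hn2 : 2 ≤ n := by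
      by_contra h
      push_neg at h
      have hone : C.ncard = 1 := by omega
      obtain ⟨a, ha⟩ := Set.ncard_eq_one.mp hone
      apply hzne
      rw [ha] at hz hv
      simp only [Set.mem_singleton_iff] at hz hv
      rw [hz, hv]
    set C' := C \ {u} with hC'
    have hfin' : C'.Finite := hfin.diff
    have hv' : v ∈ C' := ⟨hv, fun h => huv (by simpa using h.symm)⟩
    have hWC' : WC Γ C' := wc_remove_max hconn hac hWC hv hu hmax
    have hcard' : C'.ncard = n - 1 := by
      rw [hC', Set.ncard_diff_singleton_of_mem hu, hcard]
    obtain ⟨w', hw's, hw'l⟩ := IH (n-1) (by omega) C' hfin' hWC' v hv' hcard'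
    obtain ⟨u', hu'C, hu'ne, hadj⟩ := exists_neighbor_in_set hconn hac hWC hu hv huv
    have hu'C' : u' ∈ C' := ⟨hu'C, fun h => hu'ne (by simpa using h)⟩
    have hu's : u' ∈ w'.support := (hw's u').mpr hu'C'
    refine ⟨(w'.takeUntil u' hu's).append
      (Walk.cons hadj.symm (Walk.cons hadj (w'.dropUntil u' hu's))), ?_, ?_⟩
    · intro z
      rw [Walk.mem_support_append_iff]
      have hw'z : z ∈ w'.support ↔
          z ∈ (w'.takeUntil u' hu's).support ∨ z ∈ (w'.dropUntil u' hu's).support := by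
        conv_lhs => rw [← w'.take_spec hu's]
        exact Walk.mem_support_append_iff _ _
      simp only [Walk.support_cons, List.mem_cons]
      constructor
      · rintro (h | h | h | h)
        · exact ((hw's z).mp (hw'z.mpr (Or.inl h))).1
        · rw [h]; exact hu'C
        · rw [h]; exact hu
        · exact ((hw's z).mp (hw'z.mpr (Or.inr h))).1
      · intro hzC
        by_cases h : z = u
        · right; right; left; exact h
        · have : z ∈ C' := ⟨hzC, h⟩
          rcases hw'z.mp ((hw's z).mpr this) with h' | h'
          · exact Or.inl h'
          · right; right; right; exact h'
    · have hlen : (w'.takeUntil u' hu's).length + (w'.dropUntil u' hu's).length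
          = w'.length := by
        conv_rhs => rw [← w'.take_spec hu's]
        exact (Walk.length_append _ _).symm
      simp only [Walk.length_append, Walk.length_cons]
      omega

lemma chain_finset (hdeg : ∀ v : V, (Γ.neighborSet v).ncard = 3) :
    ∀ (L : ℕ) (v : V), ∃ F : Finset (List V), F.card ≤ 3^L ∧
      ∀ l : List V, l.length = L → List.Chain Γ.Adj v l → l ∈ F := by
  classical
  intro L
  induction L with
  | zero =>
    intro v
    refine ⟨{[]}, by simp, ?_⟩
    intro l hl _
    simp [List.length_eq_zero_iff.mp hl]
  | succ L IH =>
    intro v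
    choose F hF1 hF2 using IH
    refine ⟨((nbhd_finite hdeg v).toFinset).biUnion (fun b => (F b).image (List.cons b)),
      ?_, ?_⟩
    · calc (((nbhd_finite hdeg v).toFinset).biUnion
            (fun b => (F b).image (List.cons b))).card
          ≤ ∑ b ∈ (nbhd_finite hdeg v).toFinset, ((F b).image (List.cons b)).card :=
            Finset.card_biUnion_le
        _ ≤ ∑ b ∈ (nbhd_finite hdeg v).toFinset, 3^L := by
            refine Finset.sum_le_sum fun b _ => ?_
            exact le_trans (Finset.card_image_le) (hF1 b)
        _ = (nbhd_finite hdeg v).toFinset.card * 3^L := by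
            rw [Finset.sum_const, smul_eq_mul]
        _ = 3 * 3^L := by
            rw [← Set.ncard_eq_toFinset_card _ (nbhd_finite hdeg v), hdeg v]
        _ = 3^(L+1) := by ring
    · intro l hl hchain
      match l, hl with
      | b :: t, hl =>
        simp only [List.Chain, List.isChain_cons_cons] at hchain
        refine Finset.mem_biUnion.mpr ⟨b, ?_, ?_⟩
        · simp only [Set.Finite.mem_toFinset]; exact hchain.1
        · exact Finset.mem_image.mpr ⟨t, hF2 b t (by simpa using hl) hchain.2, rfl⟩

/-- There are at most `9 ^ ℓ` walk-connected sets of size `ℓ` containing a given vertex. -/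
lemma count_connected_sets (hconn : Γ.Connected) (hac : Γ.IsAcyclic)
    (hdeg : ∀ v : V, (Γ.neighborSet v).ncard = 3) (v : V) (ℓ : ℕ) :
    ∃ F : Finset (Set V), F.card ≤ 9^ℓ ∧
      ∀ C : Set V, C.Finite → WC Γ C → v ∈ C → C.ncard = ℓ → C ∈ F := by
  classical
  obtain ⟨F0, hF01, hF02⟩ := chain_finset hdeg (2*(ℓ-1)) v
  refine ⟨F0.image (fun t => {z | z = v ∨ z ∈ t}), ?_, ?_⟩
  · calc (F0.image (fun t => {z | z = v ∨ z ∈ t})).card ≤ F0.card :=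
        Finset.card_image_le
      _ ≤ 3^(2*(ℓ-1)) := hF01
      _ ≤ 9^ℓ := by
          calc (3:ℕ)^(2*(ℓ-1)) = 9^(ℓ-1) := by rw [pow_mul]; norm_num
          _ ≤ 9^ℓ := Nat.pow_le_pow_right (by norm_num) (by omega)
  · intro C hfin hWC hv hcard
    obtain ⟨w, hws, hwl⟩ := exists_spanning_walk hconn hac ℓ C hfin hWC v hv hcard
    have hsupp : w.support = v :: w.support.tail := w.support_eq_cons
    have htl : w.support.tail.length = 2*(ℓ-1) := by
      have hls : w.support.length = w.length + 1 := w.length_support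
      rw [hsupp, List.length_cons, hwl] at hls
      omega
    have hchain : List.Chain Γ.Adj v w.support.tail := by
      have := w.isChain_adj_support
      rw [hsupp] at this
      exact this
    refine Finset.mem_image.mpr ⟨w.support.tail, hF02 _ htl hchain, ?_⟩
    ext z
    simp only [Set.mem_setOf_eq]
    rw [← hws z]
    conv_rhs => rw [hsupp]
    exact List.mem_cons.symm






lemma omega_finite (hconn : Γ.Connected) (hdeg : ∀ v : V, (Γ.neighborSet v).ncard = 3)
    (x₀ : V) (n : ℕ) (ε : ℤ) : (OmegaBC Γ x₀ n ε).Finite := by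
  classical
  set B := ballSet Γ x₀ n
  have hBfin : B.Finite := ball_finite hconn hdeg x₀ n
  let g : (hBfin.toFinset → Bool) → (V → ℤ) := fun b x =>
    if h : x ∈ hBfin.toFinset then (if b ⟨x, h⟩ then 1 else -1) else ε
  apply Set.Finite.subset (Set.finite_range g)
  rintro σ ⟨hσ1, hσ2⟩
  refine ⟨fun p => σ p.1 = 1, ?_⟩
  funext x
  by_cases h : x ∈ hBfin.toFinset
  · simp only [g, dif_pos h]
    rcases hσ1 x with h1 | h1 <;> simp [h1]
  · simp only [g, dif_neg h]
    exact (hσ2 x (fun hx => h (hBfin.mem_toFinset.mpr hx))).symm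

lemma meetingEdges_finite (hconn : Γ.Connected) (hdeg : ∀ v : V, (Γ.neighborSet v).ncard = 3)
    (x₀ : V) (n : ℕ) : (meetingEdges Γ (ballSet Γ x₀ n)).Finite := by
  have hBfin := ball_finite hconn hdeg x₀ n
  apply Set.Finite.subset (hBfin.biUnion (fun x (_ : x ∈ ballSet Γ x₀ n) =>
    ((nbhd_finite hdeg x).image (fun y => s(x,y)))))
  rintro e ⟨he, x, hxB, hxe⟩
  induction e with
  | h a b =>
    have hadj : Γ.Adj a b := he
    refine Set.mem_biUnion hxB ?_
    rcases Sym2.mem_iff.mp hxe with rfl | rfl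
    · exact ⟨b, hadj, rfl⟩
    · exact ⟨a, hadj.symm, Sym2.eq_swap⟩

noncomputable def spinProd (σ : V → ℤ) : Sym2 V → ℤ :=
  Sym2.lift ⟨fun x y => σ x * σ y, fun x y => mul_comm (σ x) (σ y)⟩

noncomputable def flipC (C : Set V) (σ : V → ℤ) : V → ℤ :=
  fun x => if x ∈ C then -σ x else σ x

lemma flipC_flipC (C : Set V) (σ : V → ℤ) : flipC C (flipC C σ) = σ := by
  funext x
  by_cases h : x ∈ C <;> simp [flipC, h]

lemma flip_inj (C : Set V) : Function.Injective (flipC C) := by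
  intro σ τ h
  rw [← flipC_flipC C σ, h, flipC_flipC]

lemma flip_mem_omega {x₀ : V} {n : ℕ} {σ : V → ℤ} (hσ : σ ∈ OmegaBC Γ x₀ n 1)
    {C : Set V} (hCB : C ⊆ ballSet Γ x₀ n) : flipC C σ ∈ OmegaBC Γ x₀ n 1 := by
  refine ⟨fun x => ?_, fun x hx => ?_⟩
  · by_cases h : x ∈ C
    · rcases hσ.1 x with h1 | h1 <;> simp [flipC, h, h1]
    · rcases hσ.1 x with h1 | h1 <;> simp [flipC, h, h1]
  · have h : x ∉ C := fun hc => hx (hCB hc)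
    simp only [flipC, if_neg h]
    exact hσ.2 x hx

lemma isingH_eq_sum (hconn : Γ.Connected) (hdeg : ∀ v : V, (Γ.neighborSet v).ncard = 3)
    (x₀ : V) (n : ℕ) (σ : V → ℤ) :
    isingH Γ x₀ n σ = -∑ e ∈ (meetingEdges_finite hconn hdeg x₀ n).toFinset, spinProd σ e := by
  rw [isingH, finsum_mem_eq_finite_toFinset_sum _ (meetingEdges_finite hconn hdeg x₀ n)]
  rfl

lemma isingH_flip (hconn : Γ.Connected) (hdeg : ∀ v : V, (Γ.neighborSet v).ncard = 3)
    (x₀ : V) (n : ℕ) {σ : V → ℤ} (hσ : σ ∈ OmegaBC Γ x₀ n 1) {C : Set V}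
    (hCS : ∀ x ∈ C, σ x = -1)
    (hclosed : ∀ x, σ x = -1 → ∀ y ∈ C, Γ.Adj x y → x ∈ C) :
    isingH Γ x₀ n (flipC C σ) = isingH Γ x₀ n σ -
      2 * ((meetingEdges_finite hconn hdeg x₀ n).toFinset.filter
        (fun e => ∃ a b, e = s(a,b) ∧ a ∈ C ∧ b ∉ C)).card := by
  classical
  set MF := (meetingEdges_finite hconn hdeg x₀ n).toFinset with hMF
  have key : ∀ e ∈ MF, spinProd (flipC C σ) e =
      spinProd σ e + (if ∃ a b, e = s(a,b) ∧ a ∈ C ∧ b ∉ C then 2 else 0) := by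
    intro e he
    rw [Set.Finite.mem_toFinset] at he
    obtain ⟨hedge, -⟩ := he
    induction e with
    | h a b =>
      have hadj : Γ.Adj a b := hedge
      by_cases ha : a ∈ C <;> by_cases hb : b ∈ C
      · have hP : ¬ ∃ x y, s(a,b) = s(x,y) ∧ x ∈ C ∧ y ∉ C := by
          rintro ⟨x, y, hxy, hx, hy⟩
          rw [Sym2.eq_iff] at hxy
          rcases hxy with ⟨rfl, rfl⟩ | ⟨rfl, rfl⟩
          · exact hy hb
          · exact hy ha
        simp only [spinProd, Sym2.lift_mk, flipC, if_pos ha, if_pos hb, if_neg hP]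
        ring
      · have hP : ∃ x y, s(a,b) = s(x,y) ∧ x ∈ C ∧ y ∉ C := ⟨a, b, rfl, ha, hb⟩
        have hσa : σ a = -1 := hCS a ha
        have hσb : σ b = 1 := by
          rcases hσ.1 b with h1 | h1
          · exact h1
          · exact absurd (hclosed b h1 a ha hadj.symm) hb
        simp only [spinProd, Sym2.lift_mk, flipC, if_pos ha, if_neg hb, if_pos hP, hσa, hσb]
        ring
      · have hP : ∃ x y, s(a,b) = s(x,y) ∧ x ∈ C ∧ y ∉ C :=
          ⟨b, a, Sym2.eq_swap.symm, hb, ha⟩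
        have hσb : σ b = -1 := hCS b hb
        have hσa : σ a = 1 := by
          rcases hσ.1 a with h1 | h1
          · exact h1
          · exact absurd (hclosed a h1 b hb hadj) ha
        simp only [spinProd, Sym2.lift_mk, flipC, if_neg ha, if_pos hb, if_pos hP, hσa, hσb]
        ring
      · have hP : ¬ ∃ x y, s(a,b) = s(x,y) ∧ x ∈ C ∧ y ∉ C := by
          rintro ⟨x, y, hxy, hx, hy⟩
          rw [Sym2.eq_iff] at hxy
          rcases hxy with ⟨rfl, rfl⟩ | ⟨rfl, rfl⟩
          · exact ha hx
          · exact hb hx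
        simp only [spinProd, Sym2.lift_mk, flipC, if_neg ha, if_neg hb, if_neg hP]
        ring
  rw [isingH_eq_sum hconn hdeg, isingH_eq_sum hconn hdeg,
    Finset.sum_congr rfl key, Finset.sum_add_distrib]
  rw [← Finset.sum_filter (fun e => ∃ a b, e = s(a,b) ∧ a ∈ C ∧ b ∉ C) (fun _ => (2:ℤ)),
    Finset.sum_const]
  simp only [smul_eq_mul, hMF]
  push_cast
  ring

lemma boundary_le_filter (hconn : Γ.Connected) (hdeg : ∀ v : V, (Γ.neighborSet v).ncard = 3)
    (x₀ : V) (n : ℕ) {C : Set V} (hCB : C ⊆ ballSet Γ x₀ n) (hCfin : C.Finite) :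
    (outerBoundary Γ C).ncard ≤ ((meetingEdges_finite hconn hdeg x₀ n).toFinset.filter
      (fun e => ∃ a b, e = s(a,b) ∧ a ∈ C ∧ b ∉ C)).card := by
  classical
  have hbfin := boundary_finite hdeg hCfin
  set f : V → Sym2 V := fun z =>
    if h : ∃ y, y ∈ C ∧ Γ.Adj z y then s(z, h.choose) else s(z,z) with hf
  rw [Set.ncard_eq_toFinset_card _ hbfin]
  apply Finset.card_le_card_of_injOn f
  · intro z hz
    rw [Finset.mem_coe, Set.Finite.mem_toFinset] at hz
    obtain ⟨hzC, y₀, hy₀, hadj₀⟩ := hz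
    have hex : ∃ y, y ∈ C ∧ Γ.Adj z y := ⟨y₀, hy₀, hadj₀⟩
    obtain ⟨hyC, hyadj⟩ := hex.choose_spec
    have hfz : f z = s(z, hex.choose) := by simp [hf, dif_pos hex]
    rw [Finset.mem_coe, Finset.mem_filter, Set.Finite.mem_toFinset, hfz]
    refine ⟨⟨hyadj, hex.choose, hCB hyC, ?_⟩, ?_⟩
    · simp
    · exact ⟨hex.choose, z, Sym2.eq_swap.symm, hyC, hzC⟩
  · intro z hz z' hz' heq
    simp only [Finset.mem_coe, Set.Finite.mem_toFinset] at hz hz'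
    obtain ⟨hzC, y₀, hy₀, hadj₀⟩ := hz
    obtain ⟨hzC', y₀', hy₀', hadj₀'⟩ := hz'
    have hex : ∃ y, y ∈ C ∧ Γ.Adj z y := ⟨y₀, hy₀, hadj₀⟩
    have hex' : ∃ y, y ∈ C ∧ Γ.Adj z' y := ⟨y₀', hy₀', hadj₀'⟩
    rw [hf] at heq
    simp only [dif_pos hex, dif_pos hex'] at heq
    rw [Sym2.eq_iff] at heq
    rcases heq with ⟨h1, -⟩ | ⟨h1, h2⟩
    · exact h1
    · exact absurd (h1 ▸ hex'.choose_spec.1) hzC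

lemma gibbs_bound (hconn : Γ.Connected) (hac : Γ.IsAcyclic)
    (hdeg : ∀ v : V, (Γ.neighborSet v).ncard = 3)
    (x₀ : V) (β C₁ : ℝ) (hβpos : 0 < β)
    (ha : 0 < 2 * β - Real.log 144) (n : ℕ) :
    gibbs Γ x₀ n β 1 {σ | ∃ C : Set V, IsCompOf Γ {x | σ x = -1} C ∧
        C₁ * Real.log (((ballSet Γ x₀ n).ncard : ℝ)) < ((outerBoundary Γ C).ncard : ℝ)}
      ≤ 2 * ((ballSet Γ x₀ n).ncard : ℝ) *
        Real.exp (-(2 * β - Real.log 144) * (C₁ * Real.log ((ballSet Γ x₀ n).ncard : ℝ))) := by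
  classical
  set B : Set V := ballSet Γ x₀ n with hB
  have hBfin : B.Finite := ball_finite hconn hdeg x₀ n
  set N : ℕ := B.ncard with hN
  set k : ℝ := C₁ * Real.log (N : ℝ) with hk
  set a : ℝ := 2 * β - Real.log 144 with haa
  set E : Set (V → ℤ) := {σ | ∃ C : Set V, IsCompOf Γ {x | σ x = -1} C ∧
      k < ((outerBoundary Γ C).ncard : ℝ)} with hE
  set Ω : Set (V → ℤ) := OmegaBC Γ x₀ n 1 with hΩ
  have hΩfin : Ω.Finite := omega_finite hconn hdeg x₀ n 1
  have hEΩfin : (E ∩ Ω).Finite := hΩfin.subset Set.inter_subset_right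
  set w : (V → ℤ) → ℝ := fun σ => Real.exp (-β * ((isingH Γ x₀ n σ : ℤ) : ℝ)) with hw
  set Z : ℝ := ∑ σ ∈ hΩfin.toFinset, w σ with hZ
  have hZpos : 0 < Z := by
    apply Finset.sum_pos (fun σ _ => Real.exp_pos _)
    refine ⟨fun _ => 1, ?_⟩
    rw [Set.Finite.mem_toFinset]
    exact ⟨fun x => Or.inl rfl, fun x _ => rfl⟩
  have hgibbs : gibbs Γ x₀ n β 1 E = (∑ σ ∈ hEΩfin.toFinset, w σ) / Z := by
    rw [gibbs, finsum_mem_eq_finite_toFinset_sum _ hEΩfin,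
      finsum_mem_eq_finite_toFinset_sum _ hΩfin]
  -- the component-selection map
  set K : (V → ℤ) → Set V := fun σ =>
    if h : ∃ C : Set V, IsCompOf Γ {x | σ x = -1} C ∧ k < ((outerBoundary Γ C).ncard : ℝ)
    then h.choose else ∅ with hK
  have hKspec : ∀ σ ∈ hEΩfin.toFinset, IsCompOf Γ {x | σ x = -1} (K σ) ∧
      k < ((outerBoundary Γ (K σ)).ncard : ℝ) := by
    intro σ hσ
    rw [Set.Finite.mem_toFinset] at hσ
    have h : ∃ C : Set V, IsCompOf Γ {x | σ x = -1} C ∧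
        k < ((outerBoundary Γ C).ncard : ℝ) := hσ.1
    rw [hK]; simp only [dif_pos h]
    exact h.choose_spec
  have hKB : ∀ σ ∈ hEΩfin.toFinset, K σ ⊆ B := by
    intro σ hσ x hx
    have h1 : σ x = -1 := (hKspec σ hσ).1.1 hx
    by_contra hxB
    have hσΩ : σ ∈ Ω := (hEΩfin.mem_toFinset.mp hσ).2
    have := hσΩ.2 x hxB
    omega
  -- the per-fiber estimate
  set CF : Finset (Set V) := hEΩfin.toFinset.image K with hCF
  have hnum : (∑ σ ∈ hEΩfin.toFinset, w σ) =
      ∑ C ∈ CF, ∑ σ ∈ hEΩfin.toFinset.filter (fun σ => K σ = C), w σ :=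
    (Finset.sum_fiberwise_of_maps_to (fun σ hσ => Finset.mem_image_of_mem K hσ) w).symm
  have hfiber : ∀ C ∈ CF,
      (∑ σ ∈ hEΩfin.toFinset.filter (fun σ => K σ = C), w σ) ≤
        Real.exp (-(2*β) * ((outerBoundary Γ C).ncard : ℝ)) * Z := by
    intro C hC
    obtain ⟨σ₀, hσ₀, hσ₀C⟩ := Finset.mem_image.mp hC
    have hCB : C ⊆ B := hσ₀C ▸ hKB σ₀ hσ₀
    have hCfin : C.Finite := hBfin.subset hCB
    have step1 : ∀ σ ∈ hEΩfin.toFinset.filter (fun σ => K σ = C),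
        w σ ≤ Real.exp (-(2*β) * ((outerBoundary Γ C).ncard : ℝ)) * w (flipC C σ) := by
      intro σ hσ
      rw [Finset.mem_filter] at hσ
      obtain ⟨hσE, hσK⟩ := hσ
      obtain ⟨hcomp, hbig⟩ := hKspec σ hσE
      rw [hσK] at hcomp hbig
      have hσΩ : σ ∈ Ω := (hEΩfin.mem_toFinset.mp hσE).2
      have hCS : ∀ x ∈ C, σ x = -1 := fun x hx => hcomp.1 hx
      have hclosed : ∀ x, σ x = -1 → ∀ y ∈ C, Γ.Adj x y → x ∈ C := by
        intro x hx y hy hadj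
        exact hcomp.2.2.2 x hx y hy hadj
      have hflip := isingH_flip hconn hdeg x₀ n hσΩ hCS hclosed
      set m : ℕ := ((meetingEdges_finite hconn hdeg x₀ n).toFinset.filter
        (fun e => ∃ a b, e = s(a,b) ∧ a ∈ C ∧ b ∉ C)).card with hm
      have hbd : (outerBoundary Γ C).ncard ≤ m :=
        boundary_le_filter hconn hdeg x₀ n hCB hCfin
      have hHσ : ((isingH Γ x₀ n σ : ℤ) : ℝ) =
          ((isingH Γ x₀ n (flipC C σ) : ℤ) : ℝ) + 2 * m := by
        rw [hflip]; push_cast; ring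
      rw [hw]
      simp only
      rw [hHσ]
      rw [mul_add, Real.exp_add, mul_comm]
      apply mul_le_mul_of_nonneg_right _ (Real.exp_pos _).le
      apply Real.exp_le_exp.mpr
      have : ((outerBoundary Γ C).ncard : ℝ) ≤ (m : ℝ) := Nat.cast_le.mpr hbd
      nlinarith
    calc (∑ σ ∈ hEΩfin.toFinset.filter (fun σ => K σ = C), w σ)
        ≤ ∑ σ ∈ hEΩfin.toFinset.filter (fun σ => K σ = C),
            Real.exp (-(2*β) * ((outerBoundary Γ C).ncard : ℝ)) * w (flipC C σ) :=
          Finset.sum_le_sum step1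
      _ = Real.exp (-(2*β) * ((outerBoundary Γ C).ncard : ℝ)) *
            ∑ σ ∈ hEΩfin.toFinset.filter (fun σ => K σ = C), w (flipC C σ) := by
          rw [Finset.mul_sum]
      _ ≤ Real.exp (-(2*β) * ((outerBoundary Γ C).ncard : ℝ)) * Z := by
          apply mul_le_mul_of_nonneg_left _ (Real.exp_pos _).le
          rw [← Finset.sum_image (fun σ _ τ _ h => flip_inj C h)]
          apply Finset.sum_le_sum_of_subset_of_nonneg
          · intro τ hτ
            obtain ⟨σ, hσ, rfl⟩ := Finset.mem_image.mp hτ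
            rw [Set.Finite.mem_toFinset]
            have hσΩ : σ ∈ Ω := (hEΩfin.mem_toFinset.mp (Finset.mem_filter.mp hσ).1).2
            exact flip_mem_omega hσΩ hCB
          · exact fun τ _ _ => (Real.exp_pos _).le
  -- properties of the candidate components
  have hCprops : ∀ C ∈ CF, C ⊆ B ∧ C.Finite ∧ C.Nonempty ∧ WC Γ C ∧
      k < ((outerBoundary Γ C).ncard : ℝ) ∧ C.ncard ≤ (outerBoundary Γ C).ncard := by
    intro C hC
    obtain ⟨σ₀, hσ₀, hσ₀C⟩ := Finset.mem_image.mp hC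
    have hCB : C ⊆ B := hσ₀C ▸ hKB σ₀ hσ₀
    have hCfin : C.Finite := hBfin.subset hCB
    obtain ⟨hcomp, hbig⟩ := hKspec σ₀ hσ₀
    rw [hσ₀C] at hcomp hbig
    have hWCC : WC Γ C := wc_of_induce_connected hcomp.2.2.1
    have hbc := boundary_card_ge hconn hac hdeg C.ncard C hCfin hcomp.2.1 hWCC rfl
    exact ⟨hCB, hCfin, hcomp.2.1, hWCC, hbig, by omega⟩
  -- the per-component weight
  have hperC : ∀ C ∈ CF, Real.exp (-(2*β) * ((outerBoundary Γ C).ncard : ℝ)) ≤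
      Real.exp (-a * k) * ((1:ℝ)/144)^(C.ncard) := by
    intro C hC
    obtain ⟨hCB, hCfin, hCne, hWCC, hbig, hml⟩ := hCprops C hC
    set m : ℕ := (outerBoundary Γ C).ncard with hmm
    have hsplit : -(2*β) * (m:ℝ) = -a * (m:ℝ) + (m:ℝ) * (-Real.log 144) := by
      rw [haa]; ring
    rw [hsplit, Real.exp_add]
    apply mul_le_mul
    · apply Real.exp_le_exp.mpr
      have : k ≤ (m:ℝ) := hbig.le
      nlinarith
    · rw [Real.exp_nat_mul, Real.exp_neg, Real.exp_log (by norm_num : (0:ℝ) < 144)]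
      rw [show (144:ℝ)⁻¹ = 1/144 by norm_num]
      apply pow_le_pow_of_le_one (by norm_num) (by norm_num) hml
    · positivity
    · positivity
  -- counting the components
  have hT : (∑ C ∈ CF, ((1:ℝ)/144)^(C.ncard)) ≤ 2 * N := by
    have h1 : ∀ C ∈ CF, ((1:ℝ)/144)^C.ncard ≤
        ∑ v ∈ hBfin.toFinset.filter (fun v => v ∈ C), ((1:ℝ)/144)^C.ncard := by
      intro C hC
      obtain ⟨hCB, hCfin, ⟨v, hv⟩, -⟩ := hCprops C hC
      have hvf : v ∈ hBfin.toFinset.filter (fun v => v ∈ C) := by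
        rw [Finset.mem_filter, Set.Finite.mem_toFinset]
        exact ⟨hCB hv, hv⟩
      rw [Finset.sum_const, nsmul_eq_mul]
      have hcard : (1:ℝ) ≤ ((hBfin.toFinset.filter (fun v => v ∈ C)).card : ℝ) := by
        exact_mod_cast Finset.card_pos.mpr ⟨v, hvf⟩
      have hpos : (0:ℝ) ≤ ((1:ℝ)/144)^C.ncard := by positivity
      nlinarith
    have hinner : ∀ v ∈ hBfin.toFinset,
        (∑ C ∈ CF, if v ∈ C then ((1:ℝ)/144)^C.ncard else 0) ≤ 2 := by
      intro v _
      rw [← Finset.sum_filter]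
      set CFv := CF.filter (fun C => v ∈ C) with hCFv
      have hmaps : ∀ C ∈ CFv, C.ncard ∈ Finset.range (N+1) := by
        intro C hC
        rw [Finset.mem_range, Nat.lt_succ_iff, hN]
        exact Set.ncard_le_ncard (hCprops C (Finset.mem_filter.mp hC).1).1 hBfin
      rw [← Finset.sum_fiberwise_of_maps_to hmaps]
      have hℓ : ∀ ℓ ∈ Finset.range (N+1),
          (∑ C ∈ CFv.filter (fun C => C.ncard = ℓ), ((1:ℝ)/144)^C.ncard) ≤ (1/2:ℝ)^ℓ := by
        intro ℓ _
        obtain ⟨F, hF1, hF2⟩ := count_connected_sets hconn hac hdeg v ℓ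
        have hsub : CFv.filter (fun C => C.ncard = ℓ) ⊆ F := by
          intro C hC
          rw [Finset.mem_filter, hCFv, Finset.mem_filter] at hC
          obtain ⟨⟨hC1, hC2⟩, hC3⟩ := hC
          obtain ⟨-, hCfin, -, hWCC, -⟩ := hCprops C hC1
          exact hF2 C hCfin hWCC hC2 hC3
        calc (∑ C ∈ CFv.filter (fun C => C.ncard = ℓ), ((1:ℝ)/144)^C.ncard)
            = ∑ C ∈ CFv.filter (fun C => C.ncard = ℓ), ((1:ℝ)/144)^ℓ :=
              Finset.sum_congr rfl (fun C hC => by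
                rw [(Finset.mem_filter.mp hC).2])
          _ = ((CFv.filter (fun C => C.ncard = ℓ)).card : ℝ) * ((1:ℝ)/144)^ℓ := by
              rw [Finset.sum_const, nsmul_eq_mul]
          _ ≤ ((9:ℝ)^ℓ) * ((1:ℝ)/144)^ℓ := by
              apply mul_le_mul_of_nonneg_right _ (by positivity)
              calc ((CFv.filter (fun C => C.ncard = ℓ)).card : ℝ)
                  ≤ (F.card : ℝ) := by exact_mod_cast Finset.card_le_card hsub
                _ ≤ ((9^ℓ : ℕ) : ℝ) := by exact_mod_cast hF1
                _ = (9:ℝ)^ℓ := by push_cast; ring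
          _ = ((9:ℝ)/144)^ℓ := by rw [← mul_pow]; norm_num
          _ ≤ (1/2:ℝ)^ℓ := by
              apply pow_le_pow_left₀ (by norm_num) (by norm_num)
      calc (∑ ℓ ∈ Finset.range (N+1),
            ∑ C ∈ CFv.filter (fun C => C.ncard = ℓ), ((1:ℝ)/144)^C.ncard)
          ≤ ∑ ℓ ∈ Finset.range (N+1), (1/2:ℝ)^ℓ := Finset.sum_le_sum hℓ
        _ ≤ 2 := sum_geometric_two_le _
    calc (∑ C ∈ CF, ((1:ℝ)/144)^(C.ncard))
        ≤ ∑ C ∈ CF, ∑ v ∈ hBfin.toFinset.filter (fun v => v ∈ C), ((1:ℝ)/144)^C.ncard :=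
          Finset.sum_le_sum h1
      _ = ∑ C ∈ CF, ∑ v ∈ hBfin.toFinset, if v ∈ C then ((1:ℝ)/144)^C.ncard else 0 :=
          Finset.sum_congr rfl (fun C _ => (Finset.sum_filter _ _))
      _ = ∑ v ∈ hBfin.toFinset, ∑ C ∈ CF, if v ∈ C then ((1:ℝ)/144)^C.ncard else 0 :=
          Finset.sum_comm
      _ ≤ ∑ v ∈ hBfin.toFinset, 2 := Finset.sum_le_sum hinner
      _ = 2 * N := by
          rw [Finset.sum_const, nsmul_eq_mul, hN,
            Set.ncard_eq_toFinset_card _ hBfin]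
          ring
  -- put everything together
  rw [hgibbs, div_le_iff₀ hZpos]
  calc (∑ σ ∈ hEΩfin.toFinset, w σ)
      ≤ (∑ C ∈ CF, Real.exp (-(2*β) * ((outerBoundary Γ C).ncard : ℝ))) * Z := by
        rw [hnum, Finset.sum_mul]
        exact Finset.sum_le_sum hfiber
    _ ≤ (∑ C ∈ CF, Real.exp (-a * k) * ((1:ℝ)/144)^(C.ncard)) * Z := by
        apply mul_le_mul_of_nonneg_right _ hZpos.le
        exact Finset.sum_le_sum hperC
    _ = Real.exp (-a * k) * (∑ C ∈ CF, ((1:ℝ)/144)^(C.ncard)) * Z := by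
        rw [show (∑ C ∈ CF, Real.exp (-a*k) * ((1:ℝ)/144)^(C.ncard)) =
          Real.exp (-a*k) * ∑ C ∈ CF, ((1:ℝ)/144)^(C.ncard) from (Finset.mul_sum _ _ _).symm]
    _ ≤ Real.exp (-a * k) * (2 * N) * Z := by
        apply mul_le_mul_of_nonneg_right _ hZpos.le
        exact mul_le_mul_of_nonneg_left hT (Real.exp_pos _).le
    _ = 2 * (N:ℝ) * Real.exp (-a * k) * Z := by ring

theorem large_contours_rare' (hconn : Γ.Connected) (hac : Γ.IsAcyclic)
    (hdeg : ∀ v : V, (Γ.neighborSet v).ncard = 3)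
    (x₀ : V) (β C₁ : ℝ) (hβ : 144 * Real.exp (-2 * β) < 1)
    (hC : 1 / (2 * β - Real.log 144) < C₁) :
    Filter.Tendsto (fun n : ℕ =>
        gibbs Γ x₀ n β 1 {σ | ∃ C : Set V, IsCompOf Γ {x | σ x = -1} C ∧
          C₁ * Real.log (((ballSet Γ x₀ n).ncard : ℝ)) < ((outerBoundary Γ C).ncard : ℝ)})
      Filter.atTop (nhds 0) := by
  classical
  have h144 : Real.log 144 < 2 * β := by
    have h1 : (144:ℝ) < Real.exp (2*β) := by
      have h2 : Real.exp (-2*β) = (Real.exp (2*β))⁻¹ := by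
        rw [← Real.exp_neg]; ring_nf
      rw [h2] at hβ
      have h3 := Real.exp_pos (2*β)
      calc (144:ℝ) = (144 * (Real.exp (2*β))⁻¹) * Real.exp (2*β) := by
            field_simp
        _ < 1 * Real.exp (2*β) := by
            apply mul_lt_mul_of_pos_right hβ h3
        _ = Real.exp (2*β) := one_mul _
    calc Real.log 144 < Real.log (Real.exp (2*β)) :=
          Real.log_lt_log (by norm_num) h1
      _ = 2*β := Real.log_exp _
  set a : ℝ := 2 * β - Real.log 144 with haa
  have ha : 0 < a := by rw [haa]; linarith
  have hβpos : 0 < β := by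
    have : (0:ℝ) < Real.log 144 := Real.log_pos (by norm_num)
    linarith
  have haC : 1 < a * C₁ := by
    rw [div_lt_iff₀ ha] at hC
    linarith [hC]
  -- nonnegativity of gibbs
  have h0 : ∀ n : ℕ, 0 ≤ gibbs Γ x₀ n β 1 {σ | ∃ C : Set V, IsCompOf Γ {x | σ x = -1} C ∧
      C₁ * Real.log (((ballSet Γ x₀ n).ncard : ℝ)) < ((outerBoundary Γ C).ncard : ℝ)} := by
    intro n
    have hΩfin := omega_finite hconn hdeg x₀ n 1
    have hEΩfin : ({σ : V → ℤ | ∃ C : Set V, IsCompOf Γ {x | σ x = -1} C ∧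
        C₁ * Real.log (((ballSet Γ x₀ n).ncard : ℝ)) < ((outerBoundary Γ C).ncard : ℝ)}
        ∩ OmegaBC Γ x₀ n 1).Finite := hΩfin.subset Set.inter_subset_right
    rw [gibbs, finsum_mem_eq_finite_toFinset_sum _ hEΩfin,
      finsum_mem_eq_finite_toFinset_sum _ hΩfin]
    apply div_nonneg
    · exact Finset.sum_nonneg (fun σ _ => (Real.exp_pos _).le)
    · exact Finset.sum_nonneg (fun σ _ => (Real.exp_pos _).le)
  -- the upper bound
  set u : ℕ → ℝ := fun n =>
    2 * Real.exp ((1 - a * C₁) * Real.log (((ballSet Γ x₀ n).ncard : ℝ))) with hu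
  have hub : ∀ n : ℕ, gibbs Γ x₀ n β 1 {σ | ∃ C : Set V, IsCompOf Γ {x | σ x = -1} C ∧
      C₁ * Real.log (((ballSet Γ x₀ n).ncard : ℝ)) < ((outerBoundary Γ C).ncard : ℝ)} ≤ u n := by
    intro n
    have hbound := gibbs_bound hconn hac hdeg x₀ β C₁ hβpos (haa ▸ ha) n
    have hNpos : (0:ℝ) < ((ballSet Γ x₀ n).ncard : ℝ) := by
      have := ball_ncard_ge hconn hac hdeg x₀ n
      have : 1 ≤ (ballSet Γ x₀ n).ncard := by omega
      exact_mod_cast Nat.lt_of_lt_of_le Nat.zero_lt_one this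
    refine le_trans hbound (le_of_eq ?_)
    rw [hu]
    simp only
    set L : ℝ := Real.log (((ballSet Γ x₀ n).ncard : ℝ)) with hL
    rw [← haa, ← Real.exp_log hNpos, mul_assoc, ← Real.exp_add, ← hL]
    congr 1
    ring
  -- the upper bound tends to 0
  have hlim : Filter.Tendsto u Filter.atTop (nhds 0) := by
    have h1 : Filter.Tendsto (fun n : ℕ => Real.log (((ballSet Γ x₀ n).ncard : ℝ)))
        Filter.atTop Filter.atTop := by
      apply Filter.tendsto_atTop_mono (f := fun n : ℕ => Real.log ((n:ℝ) + 1))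
      · intro n
        apply Real.log_le_log (by positivity)
        have := ball_ncard_ge hconn hac hdeg x₀ n
        exact_mod_cast this
      · exact Real.tendsto_log_atTop.comp
          (Filter.tendsto_atTop_add_const_right _ 1 tendsto_natCast_atTop_atTop)
    have h2 : Filter.Tendsto (fun n : ℕ =>
        (1 - a * C₁) * Real.log (((ballSet Γ x₀ n).ncard : ℝ)))
        Filter.atTop Filter.atBot :=
      Filter.Tendsto.const_mul_atTop_of_neg (by linarith) h1
    have h3 := (Real.tendsto_exp_atBot).comp h2
    have h4 := h3.const_mul (2:ℝ)
    rw [mul_zero] at h4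
    exact h4
  exact squeeze_zero h0 hub hlim

end Aux

/-- For `β` with `144·e^{−2β} < 1` and `C₁ > 1/(2β − ln 144)`, the `μ_{n,β}^+`-probability
that some contour of the configuration is longer than `C₁·ln |V_n|` tends to `0` as
`n → ∞`. -/
theorem large_contours_rare {V : Type*} (Γ : SimpleGraph V) (hΓ : IsCayleyTree2 Γ)
    (x₀ : V) (β C₁ : ℝ) (hβ : 144 * Real.exp (-2 * β) < 1)
    (hC : 1 / (2 * β - Real.log 144) < C₁) :
    Filter.Tendsto (fun n : ℕ =>
        gibbs Γ x₀ n β 1 {σ | ∃ C : Set V, IsCompOf Γ {x | σ x = -1} C ∧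
          C₁ * Real.log (((ballSet Γ x₀ n).ncard : ℝ)) < ((outerBoundary Γ C).ncard : ℝ)})
      Filter.atTop (nhds 0) := by
  obtain ⟨hconn, hac, hdeg⟩ := hΓ
  exact large_contours_rare' hconn hac hdeg x₀ β C₁ hβ hC
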